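/- Let α be a finite set, f a pmf on α, M ≥ 1 a natural number, and δ ≥ 0 a real number. If X₁,…,X_M are i.i.d. with common pmf f and p̂ denotes their empirical distribution, then Pr(H(p̂‖f) ≥ δ) ≤ (M+1)^{|α|} · exp(−2·M·δ²). -/

import Mathlib

open Finset

/-- `p` is a probability mass function on the finite type `α`. -/
def IsPmf {α : Type*} [Fintype α] (p : α → ℝ) : Prop :=
  (∀ a, 0 ≤ p a) ∧ ∑ a, p a = 1

/-- Squared Hellinger divergence between pmfs on a finite type. -/
noncomputable def hellingerSq {α : Type*} [Fintype α] (p q : α → ℝ) : ℝ :=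
  (1 / 2) * ∑ a, (Real.sqrt (p a) - Real.sqrt (q a)) ^ 2

/-- Hellinger distance between pmfs on a finite type. -/
noncomputable def hellinger {α : Type*} [Fintype α] (p q : α → ℝ) : ℝ :=
  Real.sqrt (hellingerSq p q)

/-- Empirical distribution of the sample `x = (x₁, …, x_M)`. -/
noncomputable def empDist {α : Type*} [Fintype α] [DecidableEq α] {M : ℕ}
    (x : Fin M → α) (a : α) : ℝ :=
  ((Finset.univ.filter fun i => x i = a).card : ℝ) / M

/-!
Method of types. Write `q` for the empirical distribution of a sample `x`. Every sample point has
`q (x i) > 0`, so with `z = √(f / q)` we get `∏ f (x i) = (∏ z (x i))² · ∏ q (x i)`.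
By AM-GM, `∏ z (x i)` is at most the `M`-th power of `(1/M) ∑ z (x i) = ∑ √(q a f a) = 1 - H²(q‖f)`,
hence at most `exp (-M δ²)` when `H(q‖f) ≥ δ`. Summing the remaining factor `∏ q (x i)` over a
class of samples with the same empirical distribution gives at most `(∑ q)^M = 1`, and there are at
most `(M+1)^|α|` such classes.
-/

open Real

lemma Real.prod_le_arith_mean_pow {ι : Type*} (s : Finset ι) (z : ι → ℝ)
    (hz : ∀ i ∈ s, 0 ≤ z i) : ∏ i ∈ s, z i ≤ ((∑ i ∈ s, z i) / #s) ^ #s := by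
  rcases s.eq_empty_or_nonempty with rfl | hs
  · simp
  have hcard : (#s : ℝ) ≠ 0 := by exact_mod_cast hs.card_pos.ne'
  have hamgm := geom_mean_le_arith_mean_weighted s (fun _ => (#s : ℝ)⁻¹) z
    (fun _ _ => by positivity) (by simp [hcard]) hz
  calc ∏ i ∈ s, z i = (∏ i ∈ s, z i ^ (#s : ℝ)⁻¹) ^ #s := by
        rw [← prod_pow]
        exact prod_congr rfl fun i hi => (rpow_inv_natCast_pow (hz i hi) hs.card_pos.ne').symm
    _ ≤ ((∑ i ∈ s, z i) / #s) ^ #s := by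
        gcongr
        · exact prod_nonneg fun i hi => rpow_nonneg (hz i hi) _
        · simpa [← mul_sum, div_eq_inv_mul] using hamgm

lemma Real.mul_sqrt_div_eq_sqrt_mul {a : ℝ} (ha : 0 ≤ a) (b : ℝ) :
    a * √(b / a) = √(a * b) := by
  rcases ha.eq_or_lt with rfl | ha
  · simp
  calc a * √(b / a) = √(a ^ 2) * √(b / a) := by rw [sqrt_sq ha.le]
    _ = √(a * b) := by rw [← sqrt_mul (sq_nonneg a)]; congr 1; field_simp

section Hellinger

variable {α : Type*} [Fintype α]

lemma hellingerSq_nonneg (p q : α → ℝ) : 0 ≤ hellingerSq p q := by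
  unfold hellingerSq
  positivity

lemma hellingerSq_eq_one_sub_sum_sqrt_mul {p q : α → ℝ} (hp : IsPmf p) (hq : IsPmf q) :
    hellingerSq p q = 1 - ∑ a, √(p a * q a) := by
  have hterm (a : α) : (√(p a) - √(q a)) ^ 2 = p a + q a - 2 * √(p a * q a) := by
    rw [sub_sq, sq_sqrt (hp.1 a), sq_sqrt (hq.1 a), sqrt_mul (hp.1 a)]
    ring
  simp only [hellingerSq, hterm, sum_sub_distrib, sum_add_distrib, hp.2, hq.2, ← mul_sum]
  ring

lemma sum_sqrt_mul_le_one_sub_sq {p q : α → ℝ} (hp : IsPmf p) (hq : IsPmf q) {δ : ℝ}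
    (hδ : 0 ≤ δ) (h : δ ≤ hellinger p q) : ∑ a, √(p a * q a) ≤ 1 - δ ^ 2 := by
  have hsq : δ ^ 2 ≤ hellingerSq p q := by
    simpa [hellinger, sq_sqrt (hellingerSq_nonneg p q)] using pow_le_pow_left₀ hδ h 2
  rw [hellingerSq_eq_one_sub_sum_sqrt_mul hp hq] at hsq
  linarith

end Hellinger

lemma sum_le_card_image_of_sum_le_one {β γ : Type*} [Fintype β] [DecidableEq γ] (T : β → γ)
    (w : γ → β → ℝ) (hw₀ : ∀ x y, 0 ≤ w (T x) y) (hw₁ : ∀ x, ∑ y, w (T x) y ≤ 1) :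
    ∑ x, w (T x) x ≤ #(univ.image T) := by
  rw [← sum_fiberwise_of_maps_to (g := T) (t := univ.image T) fun x _ => mem_image_of_mem T
    (mem_univ x)]
  calc ∑ c ∈ univ.image T, ∑ x with T x = c, w (T x) x
      ≤ ∑ c ∈ univ.image T, (1 : ℝ) := by
        refine sum_le_sum fun c hc => ?_
        obtain ⟨x₀, -, rfl⟩ := mem_image.1 hc
        calc ∑ x with T x = T x₀, w (T x) x = ∑ x with T x = T x₀, w (T x₀) x :=
              sum_congr rfl fun x hx => by rw [(mem_filter.1 hx).2]
          _ ≤ ∑ y, w (T x₀) y := sum_le_sum_of_subset_of_nonneg (subset_univ _)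
              fun y _ _ => hw₀ x₀ y
          _ ≤ 1 := hw₁ x₀
    _ = #(univ.image T) := by simp

section Empirical

variable {α : Type*} [Fintype α] [DecidableEq α] {M : ℕ}

lemma empDist_nonneg (x : Fin M → α) (a : α) : 0 ≤ empDist x a := by
  unfold empDist
  positivity

lemma empDist_apply_pos (x : Fin M → α) (i : Fin M) : 0 < empDist x (x i) := by
  have hM : (0 : ℝ) < M := by exact_mod_cast i.pos
  have hcard : 0 < #(univ.filter fun j => x j = x i) := card_pos.2 ⟨i, by simp⟩
  unfold empDist
  positivity

lemma sum_comp_eq_mul_sum_empDist_mul (x : Fin M → α) (g : α → ℝ) :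
    ∑ i, g (x i) = M * ∑ a, empDist x a * g a := by
  rcases M.eq_zero_or_pos with rfl | hM
  · simp
  have hM : (M : ℝ) ≠ 0 := by exact_mod_cast hM.ne'
  rw [← sum_fiberwise univ x, mul_sum]
  refine sum_congr rfl fun a _ => ?_
  rw [sum_congr rfl fun i hi => congrArg g (mem_filter.1 hi).2, sum_const, nsmul_eq_mul, empDist]
  field_simp

lemma isPmf_empDist (hM : 0 < M) (x : Fin M → α) : IsPmf (empDist x) := by
  refine ⟨empDist_nonneg x, ?_⟩
  have h := sum_comp_eq_mul_sum_empDist_mul x fun _ => 1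
  simp only [sum_const, card_univ, Fintype.card_fin, nsmul_eq_mul, mul_one] at h
  exact (mul_eq_left₀ (by exact_mod_cast hM.ne')).1 h.symm

lemma prod_le_exp_mul_prod_empDist {f : α → ℝ} (hf : IsPmf f) (hM : 0 < M) {δ : ℝ}
    (hδ : 0 ≤ δ) {x : Fin M → α} (hx : δ ≤ hellinger (empDist x) f) :
    ∏ i, f (x i) ≤ exp (-2 * M * δ ^ 2) * ∏ i, empDist x (x i) := by
  set q := empDist x
  set z : α → ℝ := fun a => √(f a / q a)
  have hfz (i : Fin M) : f (x i) = z (x i) ^ 2 * q (x i) := by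
    rw [sq_sqrt (div_nonneg (hf.1 _) (empDist_nonneg x _)),
      div_mul_cancel₀ _ (empDist_apply_pos x i).ne']
  have hmean : (∑ i, z (x i)) / M = ∑ a, √(q a * f a) := by
    rw [sum_comp_eq_mul_sum_empDist_mul, mul_div_cancel_left₀ _ (by exact_mod_cast hM.ne')]
    exact sum_congr rfl fun a _ => mul_sqrt_div_eq_sqrt_mul (empDist_nonneg x a) _
  have hbc := sum_sqrt_mul_le_one_sub_sq (isPmf_empDist hM x) hf hδ hx
  have hz : ∏ i, z (x i) ≤ exp (-δ ^ 2) ^ M := by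
    calc ∏ i, z (x i) ≤ ((∑ i, z (x i)) / M) ^ M := by
          simpa using prod_le_arith_mean_pow univ (fun i => z (x i)) fun i _ => sqrt_nonneg _
      _ ≤ exp (-δ ^ 2) ^ M := by
          rw [hmean]
          gcongr
          linarith [add_one_le_exp (-δ ^ 2)]
  calc ∏ i, f (x i) = (∏ i, z (x i)) ^ 2 * ∏ i, q (x i) := by
        rw [← prod_pow, ← prod_mul_distrib]
        exact prod_congr rfl fun i _ => hfz i
    _ ≤ (exp (-δ ^ 2) ^ M) ^ 2 * ∏ i, q (x i) := by
        gcongr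
        exact prod_nonneg fun i _ => empDist_nonneg x _
    _ = exp (-2 * M * δ ^ 2) * ∏ i, q (x i) := by
        rw [← exp_nat_mul, ← exp_nat_mul]
        push_cast
        ring_nf

open Classical in
lemma card_image_empDist_le :
    #(univ.image (empDist : (Fin M → α) → α → ℝ)) ≤ (M + 1) ^ Fintype.card α := by
  let count (x : Fin M → α) (a : α) : Fin (M + 1) :=
    ⟨#(univ.filter fun i => x i = a), Nat.lt_succ_of_le ((card_filter_le _ _).trans (by simp))⟩
  calc #(univ.image (empDist : (Fin M → α) → α → ℝ))
      = #((univ.image count).image fun c a => ((c a : ℕ) : ℝ) / M) := by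
        rw [image_image]
        rfl
    _ ≤ #(univ.image count) := card_image_le
    _ ≤ (M + 1) ^ Fintype.card α := by simpa using card_le_univ (univ.image count)

lemma sum_prod_empDist_le (hM : 0 < M) :
    ∑ x : Fin M → α, ∏ i, empDist x (x i) ≤ ((M : ℝ) + 1) ^ Fintype.card α := by
  classical
  calc ∑ x : Fin M → α, ∏ i, empDist x (x i)
      ≤ #(univ.image (empDist : (Fin M → α) → α → ℝ)) :=
        sum_le_card_image_of_sum_le_one empDist (fun q y => ∏ i, q (y i))
          (fun x y => prod_nonneg fun i _ => empDist_nonneg x _)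
          fun x => by rw [← Fintype.prod_sum, prod_const, (isPmf_empDist hM x).2, one_pow]
    _ ≤ ((M : ℝ) + 1) ^ Fintype.card α := by exact_mod_cast card_image_empDist_le

end Empirical

/-- If `X₁, …, X_M` are i.i.d. with pmf `f` and `p̂` is their empirical distribution, then
`Pr(H(p̂‖f) ≥ δ) ≤ (M+1)^{|α|} · exp(−2Mδ²)`. -/
theorem prob_hellinger_emp_self_ge {α : Type*} [Fintype α] [DecidableEq α]
    (f : α → ℝ) (hf : IsPmf f) (M : ℕ) (hM : 1 ≤ M) (δ : ℝ) (hδ : 0 ≤ δ) :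
    (∑ x : Fin M → α,
        Set.indicator {x : Fin M → α | δ ≤ hellinger (empDist x) f}
          (fun x => ∏ i, f (x i)) x) ≤
      ((M : ℝ) + 1) ^ (Fintype.card α) * Real.exp (-2 * M * δ ^ 2) := by
  calc _ ≤ ∑ x : Fin M → α, exp (-2 * M * δ ^ 2) * ∏ i, empDist x (x i) :=
        sum_le_sum fun x _ => Set.indicator_le'
          (fun x hx => prod_le_exp_mul_prod_empDist hf hM hδ hx)
          (fun x _ => mul_nonneg (exp_pos _).le (prod_nonneg fun i _ => empDist_nonneg x _)) x
    _ = exp (-2 * M * δ ^ 2) * ∑ x : Fin M → α, ∏ i, empDist x (x i) := (mul_sum _ _ _).symm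
    _ ≤ ((M : ℝ) + 1) ^ Fintype.card α * exp (-2 * M * δ ^ 2) := by
        rw [mul_comm]
        gcongr
        exact sum_prod_empDist_le hM
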